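/- arXiv:2009.09327 — 5 statements merged into one kernel-verified Lean document; each statement's English description precedes it below -/
import Mathlib

section
/- For any family of at least (p-1)^k * k! + 1 distinct k-element sets, there exists a sunflower with p petals, i.e., p sets whose pairwise intersections are all equal. -/
/-- A sunflower with `p` petals: `p` sets whose pairwise intersections are all
equal to a common core. -/
def IsSunflower {α : Type*} [DecidableEq α] (p : ℕ) (P : Finset (Finset α)) : Prop :=
  P.card = p ∧ ∃ core : Finset α, ∀ A ∈ P, ∀ B ∈ P, A ≠ B → A ∩ B = core

theorem sunflower_aux {α : Type*} [DecidableEq α] (p : ℕ) (hp : 2 ≤ p) :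
    ∀ k : ℕ, ∀ S : Finset (Finset α), (∀ A ∈ S, A.card = k) →
      (p - 1) ^ k * Nat.factorial k + 1 ≤ S.card → ∃ P ⊆ S, IsSunflower p P := by
  intro k
  induction k with
  | zero =>
    intro S hcard hsize
    exfalso
    have hS : S ⊆ {∅} := by
      intro A hA
      simp [Finset.card_eq_zero.mp (hcard A hA)]
    have h1 := Finset.card_le_card hS
    simp at h1 hsize
    omega
  | succ k IH =>
    intro S hcard hsize
    classical
    set 𝒟 := S.powerset.filter (fun T => ∀ A ∈ T, ∀ B ∈ T, A ≠ B → A ∩ B = ∅) with h𝒟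
    have hne : 𝒟.Nonempty := ⟨∅, by simp [h𝒟]⟩
    obtain ⟨T, hT𝒟, hTmax⟩ := 𝒟.exists_max_image Finset.card hne
    rw [h𝒟, Finset.mem_filter, Finset.mem_powerset] at hT𝒟
    obtain ⟨hTS, hTdisj⟩ := hT𝒟
    by_cases hc : p ≤ T.card
    · -- p pairwise disjoint sets: sunflower with empty core
      obtain ⟨U, hUT, hUcard⟩ := Finset.exists_subset_card_eq hc
      exact ⟨U, hUT.trans hTS, hUcard, ∅, fun A hA B hB hAB =>
        hTdisj A (hUT hA) B (hUT hB) hAB⟩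
    · push_neg at hc
      set Y := T.biUnion id with hY
      have hYcard : Y.card ≤ (p - 1) * (k + 1) := by
        calc Y.card ≤ ∑ A ∈ T, A.card := Finset.card_biUnion_le
          _ ≤ ∑ _A ∈ T, (k+1) := Finset.sum_le_sum (fun A hA => (hcard A (hTS hA)).le)
          _ = T.card * (k+1) := by rw [Finset.sum_const, smul_eq_mul]
          _ ≤ (p - 1) * (k + 1) := by
              have : T.card ≤ p - 1 := by omega
              exact Nat.mul_le_mul_right _ this
      have hmeet : ∀ A ∈ S, (A ∩ Y).Nonempty := by
        intro A hA
        rw [Finset.nonempty_iff_ne_empty]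
        intro hAY
        have hAnotT : A ∉ T := by
          intro hAT
          have hsub : A ⊆ Y := fun x hx => Finset.mem_biUnion.2 ⟨A, hAT, hx⟩
          have hAYA : A ∩ Y = A := Finset.inter_eq_left.2 hsub
          have hAne : A ≠ ∅ := by
            intro h
            have := hcard A hA
            simp [h] at this
          exact hAne (by rw [← hAYA, hAY])
        have hins : insert A T ∈ 𝒟 := by
          rw [h𝒟, Finset.mem_filter, Finset.mem_powerset]
          constructor
          · exact Finset.insert_subset hA hTS
          · have hdisjA : ∀ C ∈ T, A ∩ C = ∅ := by
              intro C hC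
              have hCsub : C ⊆ Y := fun y hy => Finset.mem_biUnion.2 ⟨C, hC, hy⟩
              rw [← Finset.subset_empty]
              intro y hy
              rw [← hAY]
              exact Finset.mem_inter.2 ⟨(Finset.mem_inter.1 hy).1,
                hCsub (Finset.mem_inter.1 hy).2⟩
            intro B hB C hC hBC
            rcases Finset.mem_insert.1 hB with hB | hB
            · rcases Finset.mem_insert.1 hC with hC | hC
              · exact absurd (hB.trans hC.symm) hBC
              · rw [hB]; exact hdisjA C hC
            · rcases Finset.mem_insert.1 hC with hC | hC
              · rw [hC, Finset.inter_comm]; exact hdisjA B hB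
              · exact hTdisj B hB C hC hBC
        have := hTmax _ hins
        rw [Finset.card_insert_of_notMem hAnotT] at this
        omega
      -- counting
      have hScover : S ⊆ Y.biUnion (fun x => S.filter (fun A => x ∈ A)) := by
        intro A hA
        obtain ⟨x, hx⟩ := hmeet A hA
        rw [Finset.mem_inter] at hx
        exact Finset.mem_biUnion.2 ⟨x, hx.2, Finset.mem_filter.2 ⟨hA, hx.1⟩⟩
      have hex : ∃ x ∈ Y, (p - 1) ^ k * Nat.factorial k + 1 ≤
          (S.filter (fun A => x ∈ A)).card := by
        by_contra hno
        push_neg at hno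
        have hsum : S.card ≤ ∑ x ∈ Y, (S.filter (fun A => x ∈ A)).card :=
          le_trans (Finset.card_le_card hScover) Finset.card_biUnion_le
        have hbound : ∑ x ∈ Y, (S.filter (fun A => x ∈ A)).card ≤
            Y.card * ((p - 1) ^ k * Nat.factorial k) := by
          calc ∑ x ∈ Y, (S.filter (fun A => x ∈ A)).card
              ≤ ∑ _x ∈ Y, (p - 1) ^ k * Nat.factorial k :=
                Finset.sum_le_sum (fun x hx => by have := hno x hx; omega)
            _ = Y.card * ((p - 1) ^ k * Nat.factorial k) := by
                rw [Finset.sum_const, smul_eq_mul]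
        have harith : Y.card * ((p - 1) ^ k * Nat.factorial k) ≤
            (p - 1) ^ (k + 1) * Nat.factorial (k + 1) := by
          calc Y.card * ((p - 1) ^ k * Nat.factorial k)
              ≤ ((p - 1) * (k + 1)) * ((p - 1) ^ k * Nat.factorial k) :=
                Nat.mul_le_mul_right _ hYcard
            _ = (p - 1) ^ (k + 1) * Nat.factorial (k + 1) := by
                rw [Nat.factorial_succ, pow_succ]; ring
        omega
      obtain ⟨x, hxY, hxbig⟩ := hex
      set Sx := S.filter (fun A => x ∈ A) with hSx
      have hxmem : ∀ A ∈ Sx, x ∈ A := fun A hA => (Finset.mem_filter.1 hA).2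
      set S' := Sx.image (fun A => A.erase x) with hS'
      have hinj : Set.InjOn (fun A : Finset α => A.erase x) ↑Sx := by
        intro A hA B hB hAB
        have hxA := hxmem A hA
        have hxB := hxmem B hB
        rw [← Finset.insert_erase hxA, ← Finset.insert_erase hxB]
        simp only at hAB
        rw [hAB]
      have hS'card : S'.card = Sx.card := Finset.card_image_of_injOn hinj
      have hS'k : ∀ B ∈ S', B.card = k := by
        intro B hB
        obtain ⟨A, hA, rfl⟩ := Finset.mem_image.1 hB
        rw [Finset.card_erase_of_mem (hxmem A hA),
          hcard A (Finset.mem_filter.1 hA).1]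
        omega
      have hS'size : (p - 1) ^ k * Nat.factorial k + 1 ≤ S'.card := by
        rw [hS'card]; exact hxbig
      obtain ⟨P', hP'S', hP'card, c, hcore⟩ := IH S' hS'k hS'size
      have hxnot : ∀ B ∈ P', x ∉ B := by
        intro B hB
        obtain ⟨A, _, rfl⟩ := Finset.mem_image.1 (hP'S' hB)
        exact Finset.notMem_erase x A
      refine ⟨P'.image (insert x), ?_, ?_, insert x c, ?_⟩
      · intro A hA
        obtain ⟨B, hB, rfl⟩ := Finset.mem_image.1 hA
        obtain ⟨A', hA', hA'B⟩ := Finset.mem_image.1 (hP'S' hB)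
        rw [← hA'B, Finset.insert_erase (hxmem A' hA')]
        exact (Finset.mem_filter.1 hA').1
      · rw [Finset.card_image_of_injOn, hP'card]
        intro A hA B hB hAB
        have h2 : (insert x A).erase x = (insert x B).erase x := by rw [hAB]
        rwa [Finset.erase_insert (hxnot A hA), Finset.erase_insert (hxnot B hB)] at h2
      · intro A hA B hB hAB
        obtain ⟨A', hA', rfl⟩ := Finset.mem_image.1 hA
        obtain ⟨B', hB', rfl⟩ := Finset.mem_image.1 hB
        have hne' : A' ≠ B' := fun h => hAB (by rw [h])
        rw [← Finset.insert_inter_distrib, hcore A' hA' B' hB' hne']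

/-- Erdős–Rado: any family of at least `(p-1)^k * k! + 1` distinct `k`-element sets
contains a sunflower with `p` petals. -/
theorem erdos_rado_sunflower {α : Type*} [DecidableEq α] (p k : ℕ) (hp : 2 ≤ p) (hk : 1 ≤ k)
    (S : Finset (Finset α)) (hcard : ∀ A ∈ S, A.card = k)
    (hsize : (p - 1) ^ k * Nat.factorial k + 1 ≤ S.card) :
    ∃ P ⊆ S, IsSunflower p P := by
  exact sunflower_aux p hp k S hcard hsize
end

section
/- Suppose that for all integers k ≥ 2 and p ≥ 2, every r(p,k)-spread family of k-element sets of size at least r(p,k)^k contains p pairwise disjoint sets, where r(p,k) = C·p·log k for a constant C ≥ 4. Then for all p ≥ 2 and k ≥ 1, any family of more than (C·p·log k + [k=1]·p)^k distinct k-element sets contains a sunflower with p petals. -/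
open scoped Classical in
/-- A family of `k`-element sets is `r`-spread if every non-empty set `T` is
contained in at most `r^(k - |T|)` members. -/
def IsSpread {α : Type*} (r : ℝ) (k : ℕ) (S : Finset (Finset α)) : Prop :=
  ∀ T : Finset α, T.Nonempty →
    ((S.filter fun A => T ⊆ A).card : ℝ) ≤ r ^ (k - T.card)

/-!
Induction on `k`. For `k = 1` any `p` distinct singletons are pairwise disjoint. For `k ≥ 2`
put `r = C·p·log k`. If `S` is `r`-spread, the spread lemma yields `p` pairwise disjoint sets,
a sunflower with empty core. Otherwise some non-empty `T` with `|T| < k` lies in more than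
`r^(k-|T|)` members of `S`; removing `T` from them gives more than `r^(k-|T|)` distinct
`(k-|T|)`-sets, and `r` dominates the bound for `k - |T|` (this is where `C·log 2 ≥ 1` absorbs
the `[k=1]·p` term), so by induction they contain a sunflower; adding `T` back to its petals
gives a sunflower in `S`.
-/

open Finset

section Sunflower

variable {α : Type*} [DecidableEq α]

theorem IsSunflower.of_pairwiseDisjoint {p : ℕ} {P : Finset (Finset α)} (hP : #P = p)
    (hdisj : (P : Set (Finset α)).PairwiseDisjoint id) : IsSunflower p P :=
  ⟨hP, ∅, fun _ hA _ hB hAB => disjoint_iff_inter_eq_empty.mp (hdisj hA hB hAB)⟩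

theorem IsSunflower.of_card_eq_one {p : ℕ} {P : Finset (Finset α)} (hP : #P = p)
    (hone : ∀ A ∈ P, #A = 1) : IsSunflower p P := by
  refine .of_pairwiseDisjoint hP fun A hA B hB hAB => ?_
  obtain ⟨a, rfl⟩ := card_eq_one.mp (hone A hA)
  obtain ⟨b, rfl⟩ := card_eq_one.mp (hone B hB)
  exact disjoint_singleton.mpr fun hab => hAB (congrArg _ hab)

theorem IsSunflower.image_union {p : ℕ} {P : Finset (Finset α)} {T : Finset α}
    (hP : IsSunflower p P) (hT : ∀ B ∈ P, Disjoint B T) :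
    IsSunflower p (P.image (· ∪ T)) := by
  obtain ⟨hcard, core, hcore⟩ := hP
  have hinj : Set.InjOn (· ∪ T) P := fun B₁ h₁ B₂ h₂ h => by
    rw [← (hT B₁ h₁).sdiff_eq_left, ← (hT B₂ h₂).sdiff_eq_left,
      ← union_sdiff_right, ← union_sdiff_right B₂]
    exact congrArg (· \ T) h
  refine ⟨by rw [card_image_of_injOn hinj, hcard], core ∪ T, ?_⟩
  rintro _ hX _ hY hXY
  obtain ⟨B₁, hB₁, rfl⟩ := mem_image.mp hX
  obtain ⟨B₂, hB₂, rfl⟩ := mem_image.mp hY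
  rw [← inter_union_distrib_right, hcore B₁ hB₁ B₂ hB₂ fun h => hXY (h ▸ rfl)]

def link (S : Finset (Finset α)) (T : Finset α) : Finset (Finset α) :=
  {A ∈ S | T ⊆ A}.image (· \ T)

theorem card_link (S : Finset (Finset α)) (T : Finset α) :
    #(link S T) = #{A ∈ S | T ⊆ A} := by
  refine card_image_of_injOn fun A₁ h₁ A₂ h₂ h => ?_
  rw [← sdiff_union_of_subset (mem_filter.mp h₁).2, ← sdiff_union_of_subset (mem_filter.mp h₂).2]
  exact congrArg (· ∪ T) h

theorem card_of_mem_link {S : Finset (Finset α)} {T B : Finset α} {k : ℕ}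
    (hS : ∀ A ∈ S, #A = k) (hB : B ∈ link S T) : #B = k - #T := by
  obtain ⟨A, hA, rfl⟩ := mem_image.mp hB
  rw [card_sdiff_of_subset (mem_filter.mp hA).2, hS A (mem_filter.mp hA).1]

theorem exists_isSunflower_of_subset_link {p : ℕ} {S P : Finset (Finset α)} {T : Finset α}
    (hPS : P ⊆ link S T) (hP : IsSunflower p P) : ∃ Q ⊆ S, IsSunflower p Q := by
  have hdisj : ∀ B ∈ P, Disjoint B T := fun B hB => by
    obtain ⟨A, -, rfl⟩ := mem_image.mp (hPS hB)
    exact sdiff_disjoint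
  refine ⟨P.image (· ∪ T), fun X hX => ?_, hP.image_union hdisj⟩
  obtain ⟨B, hB, rfl⟩ := mem_image.mp hX
  obtain ⟨A, hA, rfl⟩ := mem_image.mp (hPS hB)
  rw [sdiff_union_of_subset (mem_filter.mp hA).2]
  exact (mem_filter.mp hA).1

/-- `#T < k` holds because at most one `k`-set contains a given `k`-set. -/
theorem exists_of_not_isSpread {r : ℝ} {k : ℕ} {S : Finset (Finset α)} (hr : 0 ≤ r)
    (hS : ∀ A ∈ S, #A = k) (h : ¬ IsSpread r k S) :
    ∃ T : Finset α, 0 < #T ∧ #T < k ∧ r ^ (k - #T) < #{A ∈ S | T ⊆ A} := by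
  simp only [IsSpread, not_forall] at h
  obtain ⟨T, hT, hnot⟩ := h
  rw [filter_congr_decidable] at hnot
  have hlt : r ^ (k - #T) < #{A ∈ S | T ⊆ A} := lt_of_not_ge hnot
  obtain ⟨A, hA⟩ : {A ∈ S | T ⊆ A}.Nonempty := by
    rw [← card_pos]; exact_mod_cast (pow_nonneg hr _).trans_lt hlt
  have hTk : #T ≤ k := hS A (mem_filter.mp hA).1 ▸ card_le_card (mem_filter.mp hA).2
  refine ⟨T, hT.card_pos, hTk.lt_of_ne fun hTeq => ?_, hlt⟩
  have hle_one : #{A ∈ S | T ⊆ A} ≤ 1 := card_le_one.mpr fun A₁ h₁ A₂ h₂ => by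
    have h (A) (hA : A ∈ {A ∈ S | T ⊆ A}) : T = A :=
      eq_of_subset_of_card_le (mem_filter.mp hA).2 (by rw [hS A (mem_filter.mp hA).1, hTeq])
    rw [← h A₁ h₁, ← h A₂ h₂]
  rw [hTeq, Nat.sub_self, pow_zero] at hlt
  exact absurd hle_one (by exact_mod_cast hlt.not_ge)

end Sunflower

theorem sunflower_base_pow_le {C : ℝ} (hC : 1 ≤ C * Real.log 2) (p : ℕ) {j k : ℕ}
    (hj : 1 ≤ j) (hjk : j ≤ k) (hk : 2 ≤ k) :
    (C * p * Real.log j + (if j = 1 then (p : ℝ) else 0)) ^ j ≤ (C * p * Real.log k) ^ j := by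
  have hlog2 : 0 < Real.log 2 := Real.log_pos one_lt_two
  have hC0 : 0 ≤ C := (pos_of_mul_pos_left (one_pos.trans_le hC) hlog2.le).le
  have hlogj : 0 ≤ Real.log j := Real.log_nonneg (by exact_mod_cast hj)
  have hlog2k : Real.log 2 ≤ Real.log k := Real.log_le_log two_pos (by exact_mod_cast hk)
  have hbase : 0 ≤ C * p * Real.log j + (if j = 1 then (p : ℝ) else 0) := by
    split_ifs <;> positivity
  refine pow_le_pow_left₀ hbase ?_ j
  split_ifs with hj1
  · subst hj1
    have hClogk : 1 ≤ C * Real.log k := hC.trans (mul_le_mul_of_nonneg_left hlog2k hC0)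
    simp only [Nat.cast_one, Real.log_one, mul_zero, zero_add]
    nlinarith [mul_le_mul_of_nonneg_left hClogk (Nat.cast_nonneg (α := ℝ) p)]
  · have hlogjk : Real.log j ≤ Real.log k :=
      Real.log_le_log (by exact_mod_cast hj) (by exact_mod_cast hjk)
    simpa using mul_le_mul_of_nonneg_left hlogjk (by positivity : 0 ≤ C * p)

open scoped Classical in
/-- Reduction of the sunflower theorem to the spread lemma: if every
`C·p·log k`-spread family of `k`-sets of size at least `(C·p·log k)^k` contains
`p` pairwise disjoint sets, then any family of more than
`(C·p·log k + [k=1]·p)^k` distinct `k`-element sets contains a sunflower with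
`p` petals. -/
theorem sunflower_of_spread_lemma {α : Type*} [DecidableEq α] (C : ℝ) (hC : 4 ≤ C)
    (hspread : ∀ k p : ℕ, 2 ≤ k → 2 ≤ p → ∀ S : Finset (Finset α),
      (∀ A ∈ S, A.card = k) → IsSpread (C * p * Real.log k) k S →
      (C * p * Real.log k) ^ k ≤ (S.card : ℝ) →
      ∃ P ⊆ S, P.card = p ∧ (P : Set (Finset α)).PairwiseDisjoint id) :
    ∀ p k : ℕ, 2 ≤ p → 1 ≤ k → ∀ S : Finset (Finset α),
      (∀ A ∈ S, A.card = k) →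
      (C * p * Real.log k + (if k = 1 then (p : ℝ) else 0)) ^ k < (S.card : ℝ) →
      ∃ P ⊆ S, IsSunflower p P := by
  intro p k hp
  induction k using Nat.strong_induction_on with
  | _ k IH =>
  intro hk S hS hlt
  obtain rfl | hk2 : k = 1 ∨ 2 ≤ k := by omega
  · obtain ⟨P, hPS, hP⟩ := exists_subset_card_eq (s := S) (n := p) (by simpa using hlt.le)
    exact ⟨P, hPS, .of_card_eq_one hP fun A hA => hS A (hPS hA)⟩
  have hClog2 : 1 ≤ C * Real.log 2 := by nlinarith [Real.log_two_gt_d9]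
  have hr : 0 ≤ C * p * Real.log k := by
    have := Real.log_nonneg (by exact_mod_cast hk : (1 : ℝ) ≤ k); positivity
  rw [if_neg (by omega), add_zero] at hlt
  by_cases hsp : IsSpread (C * p * Real.log k) k S
  · obtain ⟨P, hPS, hP, hdisj⟩ := hspread k p hk2 hp S hS hsp hlt.le
    exact ⟨P, hPS, .of_pairwiseDisjoint hP hdisj⟩
  obtain ⟨T, hT, hTk, hcrowded⟩ := exists_of_not_isSpread hr hS hsp
  obtain ⟨P, hPS, hP⟩ := IH (k - #T) (by omega) (by omega) (link S T)
    (fun B hB => card_of_mem_link hS hB)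
    ((sunflower_base_pow_le hClog2 p (by omega) (by omega) hk2).trans_lt
      (by rwa [card_link]))
  exact exists_isSunflower_of_subset_link hPS hP
end

section
/- Fix reals 0 < δ ≤ 1/2, 0 < ε ≤ 1/2, integers k ≥ 1 and 1 ≤ r ≤ 0.25·δ^{-1}·log(k/ε). Let X = {1, ..., rk} be partitioned into k blocks V_1, ..., V_k each of size r, and let S be the family of all k-element subsets of X containing exactly one element from each block. Then S is r-spread, |S| = r^k, and Pr(∃ S ∈ S : S ⊆ X_δ) < 1 - ε, where X_δ includes each element of X independently with probability δ. -/
open scoped Classical in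
/-- The probability that the Bernoulli(`δ`) random subset of `X` (each element
included independently with probability `δ`) satisfies the predicate `E`. -/
noncomputable def bernoulliPr {α : Type*} [DecidableEq α] (X : Finset α) (δ : ℝ)
    (E : Finset α → Prop) : ℝ :=
  ∑ A ∈ X.powerset, (if E A then δ ^ A.card * (1 - δ) ^ (X.card - A.card) else 0)

/-! A set contains a transversal of the blocks iff it meets every block, and the blocks are
disjoint, so under the product measure this event has probability `(1 - (1 - δ) ^ r) ^ k`.
Since `1 - δ ≥ exp (-2δ)` for `δ ≤ 1/2`, the bound on `r` gives `p := (1 - δ) ^ r ≥ √(ε / k)`,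
hence `(1 - p) ^ k ≤ exp (-k p) ≤ exp (-√(k ε)) ≤ exp (-√ε) < 1 - ε`.
For spreadness, a transversal containing `T` is forced in the `|T|` blocks that `T` meets and
free in the other `k - |T|` blocks. -/

open Finset Function
open Fintype (piFinset mem_piFinset card_piFinset)

section Bernoulli

variable {α : Type*} [DecidableEq α]

theorem bernoulliPr_congr (X : Finset α) (δ : ℝ) {E E' : Finset α → Prop}
    (h : ∀ B, E B ↔ E' B) : bernoulliPr X δ E = bernoulliPr X δ E' := by
  rw [show E = E' from funext fun B => propext (h B)]

theorem sum_powerset_bernoulli_weight (X : Finset α) (δ : ℝ) :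
    ∑ A ∈ X.powerset, δ ^ #A * (1 - δ) ^ (#X - #A) = 1 := by
  have h := prod_add (fun _ => δ) (fun _ => 1 - δ) X
  simp only [prod_const, add_sub_cancel, one_pow] at h
  refine (sum_congr rfl fun A hA => ?_).trans h.symm
  rw [card_sdiff_of_subset (mem_powerset.mp hA)]

theorem bernoulliPr_union {Y Z : Finset α} (hYZ : Disjoint Y Z) (δ : ℝ)
    (F G : Finset α → Prop) :
    bernoulliPr (Y ∪ Z) δ (fun B => F (B ∩ Y) ∧ G (B ∩ Z)) =
      bernoulliPr Y δ F * bernoulliPr Z δ G := by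
  unfold bernoulliPr
  rw [sum_mul_sum, ← sum_product']
  refine sum_nbij' (fun A => (A ∩ Y, A ∩ Z)) (fun p => p.1 ∪ p.2) ?_ ?_ ?_ ?_ ?_
  · intro A _
    simp [inter_subset_right]
  · intro p hp
    simp only [mem_product, mem_powerset] at hp ⊢
    exact union_subset_union hp.1 hp.2
  · intro A hA
    simp only [mem_powerset] at hA
    simp [← inter_union_distrib_left, inter_eq_left.mpr hA]
  · rintro ⟨P, Q⟩ hPQ
    simp only [mem_product, mem_powerset] at hPQ
    have hPZ : Disjoint P Z := hYZ.mono_left hPQ.1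
    have hQY : Disjoint Q Y := hYZ.symm.mono_left hPQ.2
    simp [union_inter_distrib_right, inter_eq_left.mpr hPQ.1, inter_eq_left.mpr hPQ.2,
      disjoint_iff_inter_eq_empty.mp hPZ, disjoint_iff_inter_eq_empty.mp hQY]
  · intro A hA
    have hAYZ : A ∩ Y ∪ A ∩ Z = A := by
      rw [← inter_union_distrib_left, inter_eq_left.mpr (mem_powerset.mp hA)]
    have hcardA : #A = #(A ∩ Y) + #(A ∩ Z) := by
      rw [← card_union_of_disjoint (hYZ.mono inter_subset_right inter_subset_right), hAYZ]
    have hY := card_le_card (inter_subset_right : A ∩ Y ⊆ Y)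
    have hZ := card_le_card (inter_subset_right : A ∩ Z ⊆ Z)
    rw [card_union_of_disjoint hYZ, hcardA,
      show #Y + #Z - (#(A ∩ Y) + #(A ∩ Z)) = (#Y - #(A ∩ Y)) + (#Z - #(A ∩ Z)) by omega]
    split_ifs <;> simp_all [pow_add]
    ring

theorem bernoulliPr_eq_sum_filter (X : Finset α) (δ : ℝ) (E : Finset α → Prop)
    [DecidablePred E] :
    bernoulliPr X δ E = ∑ A ∈ X.powerset.filter E, δ ^ #A * (1 - δ) ^ (#X - #A) := by
  rw [sum_filter]
  exact sum_congr rfl fun A _ => by congr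

theorem bernoulliPr_nonempty (W : Finset α) (δ : ℝ) :
    bernoulliPr W δ Finset.Nonempty = 1 - (1 - δ) ^ #W := by
  have h := sum_powerset_bernoulli_weight W δ
  rw [← sum_erase_add _ _ (empty_mem_powerset W)] at h
  have hfilter : W.powerset.filter Finset.Nonempty = W.powerset.erase ∅ := by
    ext A
    simp [nonempty_iff_ne_empty, and_comm]
  rw [bernoulliPr_eq_sum_filter, hfilter]
  simp only [Finset.card_empty, pow_zero, one_mul, tsub_zero] at h
  linarith

theorem bernoulliPr_forall_inter_nonempty {ι : Type*} [DecidableEq ι] (V : ι → Finset α)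
    (I : Finset ι) (hV : (I : Set ι).PairwiseDisjoint V) (δ : ℝ) :
    bernoulliPr (I.biUnion V) δ (fun B => ∀ i ∈ I, (B ∩ V i).Nonempty) =
      ∏ i ∈ I, (1 - (1 - δ) ^ #(V i)) := by
  induction I using Finset.induction_on with
  | empty => simp [bernoulliPr]
  | @insert a I ha ih =>
    rw [coe_insert, Set.pairwiseDisjoint_insert] at hV
    have hdisj : Disjoint (V a) (I.biUnion V) :=
      (disjoint_biUnion_right _ _ _).mpr fun i hi => hV.2 i hi fun h => ha (h ▸ hi)
    have hevent : ∀ B, (∀ i ∈ insert a I, (B ∩ V i).Nonempty) ↔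
        (B ∩ V a).Nonempty ∧ ∀ i ∈ I, (B ∩ I.biUnion V ∩ V i).Nonempty := by
      intro B
      rw [forall_mem_insert]
      refine and_congr_right' (forall₂_congr fun i hi => ?_)
      rw [inter_assoc, inter_eq_right.mpr (subset_biUnion_of_mem V hi)]
    rw [biUnion_insert, bernoulliPr_congr _ δ hevent,
      bernoulliPr_union hdisj δ Finset.Nonempty (fun C => ∀ i ∈ I, (C ∩ V i).Nonempty),
      bernoulliPr_nonempty, ih hV.1, prod_insert ha]

end Bernoulli

section Transversals

variable {ι α : Type*} [Fintype ι] [DecidableEq α] {V : ι → Finset α}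

def transversals (V : ι → Finset α) : Finset (Finset α) :=
  (univ.biUnion V).powerset.filter fun A => ∀ i, #(A ∩ V i) = 1

theorem image_inter_eq_singleton (hV : Pairwise (Disjoint on V)) {f : ι → α}
    (hf : ∀ i, f i ∈ V i) (i : ι) : univ.image f ∩ V i = {f i} := by
  ext a
  simp only [mem_inter, mem_image, mem_univ, true_and, mem_singleton]
  constructor
  · rintro ⟨⟨j, rfl⟩, hj⟩
    rw [hV.eq (not_disjoint_iff.mpr ⟨f j, hf j, hj⟩)]
  · rintro rfl
    exact ⟨⟨i, rfl⟩, hf i⟩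

theorem injOn_image_univ [DecidableEq ι] (hV : Pairwise (Disjoint on V)) :
    Set.InjOn (fun f : ι → α => univ.image f) (piFinset V) := by
  intro f hf g hg hfg
  funext i
  have h := congrArg (· ∩ V i) hfg
  simp only [image_inter_eq_singleton hV (mem_piFinset.mp hf),
    image_inter_eq_singleton hV (mem_piFinset.mp hg), singleton_inj] at h
  exact h

theorem transversals_eq_image [DecidableEq ι] (hV : Pairwise (Disjoint on V)) :
    transversals V = (piFinset V).image fun f => univ.image f := by
  ext A
  simp only [transversals, mem_filter, mem_powerset, mem_image, mem_piFinset]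
  constructor
  · rintro ⟨hAV, hA⟩
    choose f hf using fun i => card_eq_one.mp (hA i)
    have hfA : ∀ i, f i ∈ A ∩ V i := fun i => by simp [hf i]
    refine ⟨f, fun i => (mem_inter.mp (hfA i)).2, ?_⟩
    ext a
    simp only [mem_image, mem_univ, true_and]
    constructor
    · rintro ⟨i, rfl⟩
      exact (mem_inter.mp (hfA i)).1
    · intro ha
      obtain ⟨i, -, hai⟩ := mem_biUnion.mp (hAV ha)
      have : a ∈ A ∩ V i := mem_inter.mpr ⟨ha, hai⟩
      exact ⟨i, by simpa [hf i, eq_comm] using this⟩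
  · rintro ⟨f, hf, rfl⟩
    refine ⟨fun a ha => ?_, fun i => by rw [image_inter_eq_singleton hV hf, card_singleton]⟩
    obtain ⟨i, -, rfl⟩ := mem_image.mp ha
    exact mem_biUnion.mpr ⟨i, mem_univ i, hf i⟩

theorem card_transversals [DecidableEq ι] (hV : Pairwise (Disjoint on V)) :
    #(transversals V) = ∏ i, #(V i) := by
  rw [transversals_eq_image hV, card_image_of_injOn (injOn_image_univ hV), card_piFinset]

theorem exists_transversal_subset_iff [DecidableEq ι] (hV : Pairwise (Disjoint on V))
    {B : Finset α} :
    (∃ A ∈ transversals V, A ⊆ B) ↔ ∀ i, (B ∩ V i).Nonempty := by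
  rw [transversals_eq_image hV]
  constructor
  · rintro ⟨A, hA, hAB⟩ i
    obtain ⟨f, hf, rfl⟩ := mem_image.mp hA
    exact ⟨f i, mem_inter.mpr ⟨hAB (mem_image_of_mem f (mem_univ i)), mem_piFinset.mp hf i⟩⟩
  · intro h
    choose f hf using h
    have hfV : f ∈ piFinset V := mem_piFinset.mpr fun i => (mem_inter.mp (hf i)).2
    refine ⟨univ.image f, mem_image_of_mem _ hfV, fun a ha => ?_⟩
    obtain ⟨i, -, rfl⟩ := mem_image.mp ha
    exact (mem_inter.mp (hf i)).1

theorem card_filter_superset_transversals_le [DecidableEq ι] (hV : Pairwise (Disjoint on V))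
    {r : ℕ} (hVcard : ∀ i, #(V i) = r) (T : Finset α) :
    #((transversals V).filter (T ⊆ ·)) ≤ r ^ (Fintype.card ι - #T) := by
  rw [transversals_eq_image hV, filter_image]
  refine card_image_le.trans ?_
  set P := (piFinset V).filter fun f => T ⊆ univ.image f
  obtain hP | ⟨f₀, hf₀⟩ := P.eq_empty_or_nonempty
  · simp [hP]
  obtain ⟨hf₀V, hTf₀⟩ := mem_filter.mp hf₀
  rw [mem_piFinset] at hf₀V
  have hinj : Injective f₀ := fun i j h =>
    hV.eq (not_disjoint_iff.mpr ⟨f₀ i, hf₀V i, h ▸ hf₀V j⟩)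
  set I := T.preimage f₀ hinj.injOn
  have hIT : #I = #T := by
    classical
    rw [card_preimage, filter_true_of_mem]
    intro t ht
    obtain ⟨i, -, rfl⟩ := mem_image.mp (hTf₀ ht)
    exact ⟨i, rfl⟩
  -- a transversal through `T` must pick the same point as `f₀` in every block meeting `T`
  have hsub : P ⊆ piFinset fun i => if i ∈ I then {f₀ i} else V i := by
    intro f hf
    obtain ⟨hfV, hTf⟩ := mem_filter.mp hf
    rw [mem_piFinset] at hfV ⊢
    intro i
    split_ifs with hi
    · obtain ⟨j, -, hj⟩ := mem_image.mp (hTf (mem_preimage.mp hi))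
      obtain rfl : j = i := hV.eq (not_disjoint_iff.mpr ⟨f₀ i, hj ▸ hfV j, hf₀V i⟩)
      exact mem_singleton.mpr hj
    · exact hfV i
  calc #P ≤ #(piFinset fun i => if i ∈ I then {f₀ i} else V i) := card_le_card hsub
    _ = ∏ i, if i ∈ I then 1 else r := by
      rw [card_piFinset]
      exact prod_congr rfl fun i _ => by split_ifs <;> simp [hVcard]
    _ = r ^ (Fintype.card ι - #T) := by
      rw [prod_ite, prod_const_one, one_mul, prod_const, filter_not, filter_mem_eq_inter,
        univ_inter, card_sdiff_of_subset (subset_univ _), card_univ, hIT]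

theorem isSpread_transversals [DecidableEq ι] (hV : Pairwise (Disjoint on V)) {r : ℕ}
    (hVcard : ∀ i, #(V i) = r) : IsSpread (r : ℝ) (Fintype.card ι) (transversals V) := by
  intro T _
  have h : (#((transversals V).filter (T ⊆ ·)) : ℝ) ≤ (r : ℝ) ^ (Fintype.card ι - #T) := by
    exact_mod_cast card_filter_superset_transversals_le hV hVcard T
  convert h using 3
  exact filter_congr_decidable _ _ _

end Transversals

section Analytic

open Real

theorem exp_neg_two_mul_le_one_sub {x : ℝ} (hx0 : 0 ≤ x) (hx1 : x ≤ 1 / 2) :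
    exp (-(2 * x)) ≤ 1 - x := by
  rw [exp_neg, inv_le_iff_one_le_mul₀' (exp_pos _)]
  nlinarith [add_one_le_exp (2 * x)]

theorem exp_neg_sqrt_lt_one_sub {ε : ℝ} (hε0 : 0 < ε) (hε1 : ε ≤ 1 / 2) :
    exp (-√ε) < 1 - ε := by
  set s := √ε
  have hs0 : 0 < s := sqrt_pos.mpr hε0
  have hsε : s ^ 2 = ε := sq_sqrt hε0.le
  have hexp : 1 + s + s ^ 2 / 2 + s ^ 3 / 6 ≤ exp s := by
    have h := sum_le_exp_of_nonneg hs0.le 4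
    norm_num [Finset.sum_range_succ, Nat.factorial] at h
    linarith
  -- `(1 - s²)(1 + s + s²/2 + s³/6) - 1 = s q(s)`, and `q(s) ≥ 13/24 - 3s/4` once `s² ≤ 1/2`
  have hs : s < 13 / 18 := by nlinarith
  have hq : 0 < 1 - s / 2 - 5 * s ^ 2 / 6 - s ^ 3 / 2 - s ^ 4 / 6 := by
    nlinarith [pow_pos hs0 3, pow_pos hs0 4]
  rw [← hsε, exp_neg, inv_lt_iff_one_lt_mul₀' (exp_pos _)]
  nlinarith [mul_pos hs0 hq]

theorem one_sub_one_sub_pow_pow_lt {δ ε : ℝ} {k r : ℕ} (hδ0 : 0 < δ) (hδ1 : δ ≤ 1 / 2)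
    (hε0 : 0 < ε) (hε1 : ε ≤ 1 / 2) (hk : 1 ≤ k)
    (hr : (r : ℝ) ≤ 0.25 * δ⁻¹ * log (k / ε)) :
    (1 - (1 - δ) ^ r) ^ k < 1 - ε := by
  have hk1 : (1 : ℝ) ≤ k := by exact_mod_cast hk
  set p := (1 - δ) ^ r
  have hp0 : 0 ≤ p := pow_nonneg (by linarith) r
  have hp1 : p ≤ 1 := pow_le_one₀ (by linarith) (by linarith)
  have hδr : 4 * δ * r ≤ log (k / ε) := by
    calc 4 * δ * r ≤ 4 * δ * (0.25 * δ⁻¹ * log (k / ε)) := by gcongr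
      _ = log (k / ε) := by field_simp; norm_num
  have hp2 : ε / k ≤ p ^ 2 := by
    calc ε / k = exp (-log (k / ε)) := by
          rw [exp_neg, exp_log (by positivity : (0 : ℝ) < k / ε), inv_div]
      _ ≤ exp (-(2 * δ)) ^ (r * 2) := by
        rw [← exp_nat_mul]
        exact exp_le_exp.mpr (by push_cast; linarith)
      _ ≤ (1 - δ) ^ (r * 2) := by
        gcongr
        exact exp_neg_two_mul_le_one_sub hδ0.le hδ1
      _ = p ^ 2 := pow_mul _ _ _
  have hkp : √ε ≤ k * p := by
    have hkε : ε ≤ (k * p) ^ 2 := by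
      calc ε ≤ k * ε := le_mul_of_one_le_left hε0.le hk1
        _ = k ^ 2 * (ε / k) := by field_simp
        _ ≤ k ^ 2 * p ^ 2 := by gcongr
        _ = (k * p) ^ 2 := (mul_pow _ _ _).symm
    calc √ε ≤ √((k * p) ^ 2) := sqrt_le_sqrt hkε
      _ = k * p := sqrt_sq (by positivity)
  calc (1 - p) ^ k ≤ exp (-p) ^ k := pow_le_pow_left₀ (by linarith) (one_sub_le_exp_neg p) k
    _ = exp (-(k * p)) := by rw [← exp_nat_mul]; ring_nf
    _ ≤ exp (-√ε) := exp_le_exp.mpr (by linarith)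
    _ < 1 - ε := exp_neg_sqrt_lt_one_sub hε0 hε1

end Analytic

open scoped Classical in
theorem spread_sharpness_general (δ ε : ℝ) (hδ0 : 0 < δ) (hδ1 : δ ≤ 1 / 2)
    (hε0 : 0 < ε) (hε1 : ε ≤ 1 / 2) (k r : ℕ) (hk : 1 ≤ k)
    (hrbound : (r : ℝ) ≤ 0.25 * δ⁻¹ * Real.log (k / ε))
    (V : Fin k → Finset ℕ)
    (hVdisj : ∀ i j : Fin k, i ≠ j → Disjoint (V i) (V j))
    (hVcover : Finset.univ.biUnion V = Finset.Icc 1 (r * k))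
    (hVcard : ∀ i, (V i).card = r)
    (S : Finset (Finset ℕ))
    (hS : S = (Finset.Icc 1 (r * k)).powerset.filter
      fun A => ∀ i : Fin k, (A ∩ V i).card = 1) :
    IsSpread (r : ℝ) k S ∧ S.card = r ^ k ∧
      bernoulliPr (Finset.Icc 1 (r * k)) δ (fun B => ∃ A ∈ S, A ⊆ B) < 1 - ε := by
  have hV : Pairwise (Disjoint on V) := hVdisj
  obtain rfl : S = transversals V := by rw [hS, ← hVcover, transversals]; congr!
  have hmeet : bernoulliPr (univ.biUnion V) δ (fun B => ∀ i, (B ∩ V i).Nonempty) =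
      (1 - (1 - δ) ^ r) ^ k := by
    simpa [hVcard] using bernoulliPr_forall_inter_nonempty V univ (hV.set_pairwise _) δ
  refine ⟨by simpa using isSpread_transversals hV hVcard,
    by simp [card_transversals hV, hVcard], ?_⟩
  rw [← hVcover, bernoulliPr_congr _ δ fun B => exists_transversal_subset_iff hV, hmeet]
  exact one_sub_one_sub_pow_pow_lt hδ0 hδ1 hε0 hε1 hk hrbound

open scoped Classical in
/-- Sharpness of the spread lemma: for `X = {1,…,rk}` partitioned into `k`
blocks of size `r` with `r ≤ 0.25·δ⁻¹·log(k/ε)`, the family `S` of all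
transversals is `r`-spread with `|S| = r^k`, yet the Bernoulli(`δ`) random
subset of `X` contains a member of `S` with probability less than `1 - ε`. -/
theorem spread_sharpness (δ ε : ℝ) (hδ0 : 0 < δ) (hδ1 : δ ≤ 1 / 2)
    (hε0 : 0 < ε) (hε1 : ε ≤ 1 / 2) (k r : ℕ) (hk : 1 ≤ k) (hr : 1 ≤ r)
    (hrbound : (r : ℝ) ≤ 0.25 * δ⁻¹ * Real.log (k / ε))
    (V : Fin k → Finset ℕ)
    (hVdisj : ∀ i j : Fin k, i ≠ j → Disjoint (V i) (V j))
    (hVcover : Finset.univ.biUnion V = Finset.Icc 1 (r * k))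
    (hVcard : ∀ i, (V i).card = r)
    (S : Finset (Finset ℕ))
    (hS : S = (Finset.Icc 1 (r * k)).powerset.filter
      fun A => ∀ i : Fin k, (A ∩ V i).card = 1) :
    IsSpread (r : ℝ) k S ∧ S.card = r ^ k ∧
      bernoulliPr (Finset.Icc 1 (r * k)) δ (fun B => ∃ A ∈ S, A ⊆ B) < 1 - ε :=
  spread_sharpness_general δ ε hδ0 hδ1 hε0 hε1 k r hk hrbound V hVdisj hVcover hVcard S hS
end

section
/- For all reals 0 < δ ≤ 1/2, 0 < ε ≤ 1/2, integers k ≥ 1 and 1 ≤ r ≤ 0.25·δ^{-1}·log(k/ε), the inequality (1 - (1-δ)^r)^k < 1 - ε holds. -/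
private lemma exp_cubic_bound (t : ℝ) (ht : 0 ≤ t) :
    1 + t + t ^ 2 / 2 + t ^ 3 / 6 ≤ Real.exp t := by
  have h := Real.sum_le_exp_of_nonneg ht 4
  norm_num [Finset.sum_range_succ, Nat.factorial] at h
  linarith

private lemma exp_neg_sqrt_lt (ε : ℝ) (hε0 : 0 < ε) (hε1 : ε ≤ 1 / 2) :
    Real.exp (-Real.sqrt ε) < 1 - ε := by
  set t : ℝ := Real.sqrt ε with ht
  have htpos : 0 < t := Real.sqrt_pos.mpr hε0
  have ht2 : t ^ 2 = ε := Real.sq_sqrt hε0.le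
  have hε2 : t ^ 2 ≤ 1 / 2 := by rw [ht2]; exact hε1
  have h1t2 : 0 < 1 - t ^ 2 := by linarith
  have hcub := exp_cubic_bound t htpos.le
  have h3 : t ^ 3 ≤ t / 2 := by nlinarith
  have h4 : t ^ 4 ≤ t ^ 2 / 2 := by nlinarith
  have h5 : t ^ 5 ≤ t / 4 := by nlinarith
  have h18 : t < 13 / 18 := by nlinarith
  have hS : 1 + t - t ^ 2 / 2 - 5 * t ^ 3 / 6 - t ^ 4 / 2 - t ^ 5 / 6
      ≤ (1 - t ^ 2) * Real.exp t := by
    nlinarith [mul_le_mul_of_nonneg_left hcub h1t2.le]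
  have hpoly : 0 < t - t ^ 2 / 2 - 5 * t ^ 3 / 6 - t ^ 4 / 2 - t ^ 5 / 6 := by
    nlinarith [mul_pos htpos (sub_pos.mpr h18)]
  have key : 1 < (1 - t ^ 2) * Real.exp t := by linarith
  have hmul : Real.exp (-t) * Real.exp t = 1 := by rw [← Real.exp_add]; simp
  rw [← ht2]
  nlinarith [key, hmul, Real.exp_pos t, Real.exp_pos (-t)]

/-- For `0 < δ ≤ 1/2`, `0 < ε ≤ 1/2`, `k ≥ 1` and `1 ≤ r ≤ 0.25·δ⁻¹·log(k/ε)`,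
we have `(1 - (1-δ)^r)^k < 1 - ε`. -/
theorem blocks_prob_bound (δ ε : ℝ) (hδ0 : 0 < δ) (hδ1 : δ ≤ 1 / 2)
    (hε0 : 0 < ε) (hε1 : ε ≤ 1 / 2) (k r : ℕ) (hk : 1 ≤ k) (hr : 1 ≤ r)
    (hrbound : (r : ℝ) ≤ 0.25 * δ⁻¹ * Real.log (k / ε)) :
    (1 - (1 - δ) ^ r) ^ k < 1 - ε := by
  have hk1 : (1:ℝ) ≤ k := by exact_mod_cast hk
  have hkpos : (0:ℝ) < k := by linarith
  have h1δpos : (0:ℝ) < 1 - δ := by linarith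
  set x : ℝ := (1 - δ) ^ r with hx
  have hxpos : 0 < x := pow_pos h1δpos r
  have hx1 : x ≤ 1 := pow_le_one₀ h1δpos.le (by linarith)
  set A : ℝ := Real.exp (-(2 * δ * r)) with hA
  have hApos : 0 < A := Real.exp_pos _
  -- A < x
  have hAx : A < x := by
    have hb : Real.exp (-(2 * δ)) < 1 - δ := by
      have h2 : 2 * δ + 1 < Real.exp (2 * δ) := Real.add_one_lt_exp (by positivity)
      have hmul : Real.exp (-(2 * δ)) * Real.exp (2 * δ) = 1 := by
        rw [← Real.exp_add]; simp
      nlinarith [Real.exp_pos (2 * δ), Real.exp_pos (-(2 * δ))]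
    calc A = Real.exp (-(2 * δ)) ^ r := by
            rw [← Real.exp_nat_mul, hA]; congr 1; ring
      _ < (1 - δ) ^ r := pow_lt_pow_left₀ hb (Real.exp_pos _).le (by omega)
  -- 4δr ≤ log (k/ε)
  have hL : 4 * δ * r ≤ Real.log (k / ε) := by
    have h4 : δ * r ≤ δ * (0.25 * δ⁻¹ * Real.log (k / ε)) :=
      mul_le_mul_of_nonneg_left hrbound hδ0.le
    have hinv : δ * δ⁻¹ = 1 := mul_inv_cancel₀ hδ0.ne'
    have heq : δ * (0.25 * δ⁻¹ * Real.log (k / ε)) = 0.25 * Real.log (k / ε) := by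
      field_simp
    rw [heq] at h4; linarith
  -- A^2 ≥ ε / k
  have hA2 : ε / k ≤ A ^ 2 := by
    have hek : (0:ℝ) < ε / k := by positivity
    have hlog : Real.log (ε / k) ≤ -(2 * δ * r) * 2 := by
      rw [Real.log_div hkpos.ne' hε0.ne'] at hL
      rw [Real.log_div hε0.ne' hkpos.ne']
      linarith
    calc ε / k = Real.exp (Real.log (ε / k)) := (Real.exp_log hek).symm
      _ ≤ Real.exp (-(2 * δ * r) * 2) := Real.exp_le_exp.mpr hlog
      _ = A ^ 2 := by rw [hA, sq, ← Real.exp_add]; congr 1; ring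
  -- sqrt ε ≤ A * k
  have hsq : Real.sqrt ε ≤ A * k := by
    have h1 : ε ≤ (A * k) ^ 2 := by
      have h0 : ε / k * k ≤ A ^ 2 * k := mul_le_mul_of_nonneg_right hA2 hkpos.le
      have h2 : ε ≤ A ^ 2 * k := by rwa [div_mul_cancel₀ _ hkpos.ne'] at h0
      nlinarith [sq_nonneg A]
    calc Real.sqrt ε ≤ Real.sqrt ((A * k) ^ 2) := Real.sqrt_le_sqrt h1
      _ = A * k := Real.sqrt_sq (by positivity)
  -- exp (-sqrt ε) < 1 - ε
  have hfinal : Real.exp (-Real.sqrt ε) < 1 - ε := exp_neg_sqrt_lt ε hε0 hε1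
  -- chain
  calc (1 - x) ^ k ≤ Real.exp (-x) ^ k := by
        apply pow_le_pow_left₀ (by linarith)
        linarith [Real.add_one_le_exp (-x)]
    _ = Real.exp (-x * k) := by rw [← Real.exp_nat_mul]; congr 1; ring
    _ < Real.exp (-(A * k)) := by
        apply Real.exp_lt_exp.mpr
        have := mul_lt_mul_of_pos_right hAx hkpos
        linarith
    _ ≤ Real.exp (-Real.sqrt ε) := Real.exp_le_exp.mpr (by linarith)
    _ < 1 - ε := hfinal
end

section
/- Assume the spread lemma in the form: there is a constant B ≥ 1 such that for any integer k ≥ 2, reals 0 < δ, ε ≤ 1/2, r ≥ B·δ^{-1}·log(k/ε), and any r-spread family S of k-element subsets of a finite set X with |S| ≥ r^k, one has Pr(∃ S ∈ S : S ⊆ X_δ) > 1 - ε. Then for every integer p ≥ 2 and reals δ, ε with 0 < δ, ε ≤ 1/2 and ⌊1/δ⌋·ε ≤ 1, any such family S contains at least ⌊1/δ⌋ pairwise disjoint sets, provided r ≥ B·δ^{-1}·log(k/ε). -/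
open scoped Classical

/-- The `i`-th class of the partition of `X` induced by `g`. -/
noncomputable def cls {α : Type*} (X : Finset α) {q : ℕ} (g : {x // x ∈ X} → Fin q) (i : Fin q) :
    Finset α :=
  (X.attach.filter fun x => g x = i).image Subtype.val

lemma mem_cls {α : Type*} {X : Finset α} {q : ℕ} {g : {x // x ∈ X} → Fin q} {i : Fin q}
    {y : α} : y ∈ cls X g i ↔ ∃ h : y ∈ X, g ⟨y, h⟩ = i := by
  simp only [cls, Finset.mem_image, Finset.mem_filter, Finset.mem_attach, true_and]
  constructor
  · rintro ⟨⟨x, hx⟩, hgx, rfl⟩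
    exact ⟨hx, hgx⟩
  · rintro ⟨h, hg⟩
    exact ⟨⟨y, h⟩, hg, rfl⟩

lemma cls_subset {α : Type*} {X : Finset α} {q : ℕ} {g : {x // x ∈ X} → Fin q} {i : Fin q} :
    cls X g i ⊆ X := fun y hy => (mem_cls.1 hy).choose

lemma card_fiber {α : Type*} [DecidableEq α] (X : Finset α) {q : ℕ} (i : Fin q)
    (A : Finset α) (hA : A ⊆ X) :
    (Finset.univ.filter fun g : {x // x ∈ X} → Fin q => cls X g i = A).card
      = (q - 1) ^ (X.card - A.card) := by
  have hset : (Finset.univ.filter fun g : {x // x ∈ X} → Fin q => cls X g i = A)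
      = Fintype.piFinset (fun x : {x // x ∈ X} =>
          if (x : α) ∈ A then ({i} : Finset (Fin q)) else {i}ᶜ) := by
    ext g
    simp only [Finset.mem_filter, Finset.mem_univ, true_and, Fintype.mem_piFinset]
    constructor
    · intro hgA x
      by_cases hx : (x : α) ∈ A
      · simp only [hx, if_true, Finset.mem_singleton]
        rw [← hgA] at hx
        obtain ⟨h, hg⟩ := mem_cls.1 hx
        simpa using hg
      · simp only [hx, if_false, Finset.mem_compl, Finset.mem_singleton]
        intro hgx
        exact hx (hgA ▸ mem_cls.2 ⟨x.2, by simpa using hgx⟩)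
    · intro hg
      ext y
      rw [mem_cls]
      constructor
      · rintro ⟨h, hgy⟩
        have := hg ⟨y, h⟩
        by_contra hy
        simp [hy, hgy] at this
      · intro hy
        refine ⟨hA hy, ?_⟩
        have := hg ⟨y, hA hy⟩
        simpa [hy] using this
  rw [hset, Fintype.card_piFinset]
  have : ∀ x : {x // x ∈ X},
      (if (x : α) ∈ A then ({i} : Finset (Fin q)) else {i}ᶜ).card
        = if (x : α) ∈ A then 1 else q - 1 := by
    intro x
    by_cases hx : (x : α) ∈ A <;> simp [hx, Finset.card_compl]
  rw [Finset.prod_congr rfl fun x _ => this x, Finset.prod_ite, Finset.prod_const_one,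
    Finset.prod_const, one_mul]
  congr 1
  have h1 : (Finset.univ.filter fun x : {x // x ∈ X} => (x : α) ∈ A).card = A.card := by
    refine Finset.card_bij (fun x _ => (x : α)) ?_ ?_ ?_
    · intro x hx; exact (Finset.mem_filter.1 hx).2
    · intro x _ y _ h; exact Subtype.ext h
    · intro a ha; exact ⟨⟨a, hA ha⟩, by simp [ha], rfl⟩
  have h2 := Finset.card_filter_add_card_filter_not
    (s := (Finset.univ : Finset {x // x ∈ X})) (p := fun x => (x : α) ∈ A)
  have h3 : (Finset.univ : Finset {x // x ∈ X}).card = X.card := by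
    simp [Finset.card_univ]
  omega

/-- Assuming the spread lemma, for `0 < δ, ε ≤ 1/2` with `⌊1/δ⌋·ε ≤ 1` and
`r ≥ B·δ⁻¹·log(k/ε)`, any `r`-spread family of `k`-subsets of `X` with
`|S| ≥ r^k` contains at least `⌊1/δ⌋` pairwise disjoint sets. -/
theorem floor_disjoint_of_spread_lemma {α : Type*} [DecidableEq α] (B : ℝ) (hB : 1 ≤ B)
    (hspread : ∀ k : ℕ, 2 ≤ k → ∀ δ ε : ℝ, 0 < δ → δ ≤ 1 / 2 → 0 < ε → ε ≤ 1 / 2 →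
      ∀ r : ℝ, B * δ⁻¹ * Real.log (k / ε) ≤ r →
      ∀ X : Finset α, ∀ S : Finset (Finset α), (∀ A ∈ S, A ⊆ X) →
      (∀ A ∈ S, A.card = k) → IsSpread r k S → r ^ k ≤ (S.card : ℝ) →
      bernoulliPr X δ (fun C => ∃ A ∈ S, A ⊆ C) > 1 - ε) :
    ∀ p : ℕ, 2 ≤ p → ∀ δ ε : ℝ, 0 < δ → δ ≤ 1 / 2 → 0 < ε → ε ≤ 1 / 2 →
      (⌊1 / δ⌋₊ : ℝ) * ε ≤ 1 →
      ∀ k : ℕ, 2 ≤ k → ∀ r : ℝ, B * δ⁻¹ * Real.log (k / ε) ≤ r →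
      ∀ X : Finset α, ∀ S : Finset (Finset α), (∀ A ∈ S, A ⊆ X) →
      (∀ A ∈ S, A.card = k) → IsSpread r k S → r ^ k ≤ (S.card : ℝ) →
      ∃ P ⊆ S, P.card = ⌊1 / δ⌋₊ ∧ (P : Set (Finset α)).PairwiseDisjoint id := by
  intro p hp δ ε hδ hδ2 hε hε2 hfloor k hk r hr X S hSX hScard hSspread hSsize
  set q : ℕ := ⌊1 / δ⌋₊ with hq
  have hq2 : 2 ≤ q := by
    apply Nat.le_floor
    rw [le_div_iff₀ hδ]; push_cast; linarith
  have hq0 : 0 < q := by omega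
  have hqR : (0 : ℝ) < q := by exact_mod_cast hq0
  set n : ℕ := X.card with hn
  set E : Finset α → Prop := fun C => ∃ A ∈ S, A ⊆ C with hE
  -- apply the spread lemma with δ' = 1/q
  have hlog : 0 ≤ Real.log (k / ε) := by
    apply Real.log_nonneg
    rw [le_div_iff₀ hε]
    have : (2 : ℝ) ≤ k := by exact_mod_cast hk
    linarith
  have hqle : (q : ℝ) ≤ δ⁻¹ := by
    rw [hq, ← one_div]
    exact Nat.floor_le (by positivity)
  have hP : bernoulliPr X (q : ℝ)⁻¹ E > 1 - ε := by
    apply hspread k hk _ ε (by positivity) _ hε hε2 r _ X S hSX hScard hSspread hSsize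
    · rw [show (1:ℝ)/2 = 2⁻¹ by norm_num]
      have h2q : (2:ℝ) ≤ (q:ℝ) := by exact_mod_cast hq2
      have := one_div_le_one_div_of_le (by norm_num : (0:ℝ) < 2) h2q
      simpa [one_div] using this
    · rw [inv_inv]
      calc B * (q : ℝ) * Real.log (k / ε) ≤ B * δ⁻¹ * Real.log (k / ε) := by
            apply mul_le_mul_of_nonneg_right _ hlog
            apply mul_le_mul_of_nonneg_left hqle (by linarith)
        _ ≤ r := hr
  -- count_eq: for each i, the number of good g equals q^n * bernoulliPr
  have hcount : ∀ i : Fin q,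
      ((Finset.univ.filter fun g : {x // x ∈ X} → Fin q => E (cls X g i)).card : ℝ)
        = (q : ℝ) ^ n * bernoulliPr X (q : ℝ)⁻¹ E := by
    intro i
    have hmaps : ∀ g ∈ (Finset.univ : Finset ({x // x ∈ X} → Fin q)),
        cls X g i ∈ X.powerset := fun g _ => Finset.mem_powerset.2 cls_subset
    have hfib := Finset.sum_fiberwise_of_maps_to hmaps
      (fun g => if E (cls X g i) then (1 : ℝ) else 0)
    rw [Finset.card_filter]
    push_cast
    rw [← hfib]
    rw [bernoulliPr, Finset.mul_sum]
    apply Finset.sum_congr rfl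
    intro A hA
    have hAX : A ⊆ X := Finset.mem_powerset.1 hA
    have hinner : ∑ g ∈ Finset.univ.filter
        (fun g : {x // x ∈ X} → Fin q => cls X g i = A),
        (if E (cls X g i) then (1:ℝ) else 0)
        = ((q - 1) ^ (n - A.card) : ℕ) * (if E A then (1:ℝ) else 0) := by
      rw [Finset.sum_congr rfl (fun g hg => by
        rw [(Finset.mem_filter.1 hg).2]), Finset.sum_const, ← card_fiber X i A hAX]
      simp [nsmul_eq_mul]
    rw [hinner]
    have hacard : A.card ≤ n := Finset.card_le_card hAX
    by_cases hEA : E A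
    · simp only [hEA, if_true, mul_one]
      push_cast [Nat.cast_sub hq0]
      have h1 : (1 : ℝ) - (q:ℝ)⁻¹ = ((q:ℝ) - 1) * (q:ℝ)⁻¹ := by
        field_simp
      have key : (q:ℝ)^n * ((q:ℝ)⁻¹ ^ A.card * (1 - (q:ℝ)⁻¹) ^ (n - A.card))
          = ((q:ℝ) - 1) ^ (n - A.card) := by
        rw [h1, mul_pow]
        calc (q:ℝ)^n * ((q:ℝ)⁻¹ ^ A.card *
              (((q:ℝ)-1) ^ (n - A.card) * ((q:ℝ)⁻¹) ^ (n - A.card)))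
            = ((q:ℝ)-1) ^ (n - A.card) *
              ((q:ℝ)^n * ((q:ℝ)⁻¹ ^ A.card * ((q:ℝ)⁻¹) ^ (n - A.card))) := by ring
          _ = ((q:ℝ)-1) ^ (n - A.card) * ((q:ℝ)^n * ((q:ℝ)⁻¹) ^ n) := by
              rw [← pow_add, Nat.add_sub_cancel' hacard]
          _ = ((q:ℝ)-1) ^ (n - A.card) := by
              rw [← mul_pow, mul_inv_cancel₀ (ne_of_gt hqR), one_pow, mul_one]
      linear_combination -key
    · simp [hEA]
  -- double counting
  set Good : Finset ({x // x ∈ X} → Fin q) :=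
    Finset.univ.filter (fun g => ∀ i : Fin q, E (cls X g i)) with hGood
  have hΩcard : Fintype.card ({x // x ∈ X} → Fin q) = q ^ n := by
    rw [Fintype.card_fun, Fintype.card_fin, Fintype.card_coe]
  have hkey : ∑ i : Fin q,
      (Finset.univ.filter fun g : {x // x ∈ X} → Fin q => E (cls X g i)).card
        ≤ (q - 1) * q ^ n + Good.card := by
    have hswap : ∑ i : Fin q,
        (Finset.univ.filter fun g : {x // x ∈ X} → Fin q => E (cls X g i)).card
        = ∑ g : {x // x ∈ X} → Fin q,
            (Finset.univ.filter fun i : Fin q => E (cls X g i)).card := by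
      simp_rw [Finset.card_filter]
      rw [Finset.sum_comm]
    rw [hswap]
    have hbound : ∀ g : {x // x ∈ X} → Fin q,
        (Finset.univ.filter fun i : Fin q => E (cls X g i)).card
          ≤ (q - 1) + (if (∀ i : Fin q, E (cls X g i)) then 1 else 0) := by
      intro g
      by_cases hall : ∀ i : Fin q, E (cls X g i)
      · rw [if_pos hall, Finset.filter_true_of_mem fun i _ => hall i,
          Finset.card_univ, Fintype.card_fin]
        omega
      · simp only [hall, if_false, add_zero]
        push_neg at hall
        obtain ⟨i₀, hi₀⟩ := hall
        have hsub : (Finset.univ.filter fun i : Fin q => E (cls X g i))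
            ⊆ Finset.univ.erase i₀ := by
          intro i hi
          rcases Finset.mem_filter.1 hi with ⟨_, hEi⟩
          exact Finset.mem_erase.2 ⟨fun h => hi₀ (h ▸ hEi), Finset.mem_univ i⟩
        have := Finset.card_le_card hsub
        rwa [Finset.card_erase_of_mem (Finset.mem_univ i₀), Finset.card_univ,
          Fintype.card_fin] at this
    calc ∑ g : {x // x ∈ X} → Fin q,
          (Finset.univ.filter fun i : Fin q => E (cls X g i)).card
        ≤ ∑ g : {x // x ∈ X} → Fin q,
            ((q - 1) + (if (∀ i : Fin q, E (cls X g i)) then 1 else 0)) :=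
          Finset.sum_le_sum fun g _ => hbound g
      _ = (q - 1) * q ^ n + Good.card := by
          rw [hGood, Finset.sum_add_distrib, Finset.sum_const, Finset.card_univ,
            hΩcard, smul_eq_mul, mul_comm, ← Finset.card_filter]
  -- conclude Good is nonempty
  have hGoodpos : 0 < Good.card := by
    by_contra h
    push_neg at h
    have hGc : Good.card = 0 := by omega
    have hreal : ((q : ℝ) - 1) * (q:ℝ) ^ n
        ≥ ∑ i : Fin q, ((Finset.univ.filter
            fun g : {x // x ∈ X} → Fin q => E (cls X g i)).card : ℝ) := by
      have := hkey
      rw [hGc, add_zero] at this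
      have hcast : (((q - 1) * q ^ n : ℕ) : ℝ) = ((q:ℝ) - 1) * (q:ℝ) ^ n := by
        push_cast [Nat.cast_sub hq0]; ring
      calc ∑ i : Fin q, ((Finset.univ.filter
            fun g : {x // x ∈ X} → Fin q => E (cls X g i)).card : ℝ)
          = ((∑ i : Fin q, (Finset.univ.filter
              fun g : {x // x ∈ X} → Fin q => E (cls X g i)).card : ℕ) : ℝ) := by
            push_cast; rfl
        _ ≤ (((q - 1) * q ^ n : ℕ) : ℝ) := by exact_mod_cast this
        _ = ((q:ℝ) - 1) * (q:ℝ) ^ n := hcast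
    rw [Finset.sum_congr rfl (fun i _ => hcount i), Finset.sum_const,
      Finset.card_univ, Fintype.card_fin, nsmul_eq_mul] at hreal
    have hqpow : (0 : ℝ) < (q:ℝ) ^ n := by positivity
    have hqε : (q : ℝ) * ε ≤ 1 := by rwa [hq] at hfloor ⊢
    nlinarith [mul_lt_mul_of_pos_left hP (mul_pos hqR hqpow),
      mul_le_mul_of_nonneg_left hqε (le_of_lt hqpow)]
  -- extract the disjoint family
  obtain ⟨g, hg⟩ := Finset.card_pos.1 hGoodpos
  rw [hGood, Finset.mem_filter] at hg
  have hgood := hg.2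
  choose t htS htsub using hgood
  have htne : ∀ i : Fin q, (t i).Nonempty := by
    intro i
    rw [← Finset.card_pos, hScard _ (htS i)]
    omega
  have hclsdisj : ∀ i j : Fin q, i ≠ j → Disjoint (cls X g i) (cls X g j) := by
    intro i j hij
    rw [Finset.disjoint_left]
    intro x hxi hxj
    obtain ⟨h1, hg1⟩ := mem_cls.1 hxi
    obtain ⟨h2, hg2⟩ := mem_cls.1 hxj
    exact hij (hg1 ▸ hg2 ▸ rfl)
  have htdisj : ∀ i j : Fin q, i ≠ j → Disjoint (t i) (t j) := fun i j hij =>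
    Finset.disjoint_of_subset_left (htsub i)
      (Finset.disjoint_of_subset_right (htsub j) (hclsdisj i j hij))
  have htinj : Function.Injective t := by
    intro i j hij
    by_contra h
    obtain ⟨x, hx⟩ := htne i
    have : x ∈ t j := hij ▸ hx
    exact Finset.disjoint_left.1 (htdisj i j h) hx this
  refine ⟨Finset.univ.image t, ?_, ?_, ?_⟩
  · intro A hA
    obtain ⟨i, _, rfl⟩ := Finset.mem_image.1 hA
    exact htS i
  · rw [Finset.card_image_of_injective _ htinj, Finset.card_univ, Fintype.card_fin]
  · intro a ha b hb hab
    simp only [Finset.coe_image, Finset.coe_univ, Set.image_univ, Set.mem_range] at ha hb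
    obtain ⟨i, rfl⟩ := ha
    obtain ⟨j, rfl⟩ := hb
    exact htdisj i j (fun h => hab (h ▸ rfl))
end
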